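/- Let 1 ≤ p' < p < ∞, assume that X supports a p'-Poincaré inequality, and let ∅ ≠ Ω ⊊ X be an open set. Then Ω satisfies a pointwise p-Hardy inequality if and only if there are constants C_Γ > 0, ν > C_QC and κ ≥ 1 such that for each non-negative bounded lower semicontinuous g: X → [0,∞) vanishing on Ω^c and every x ∈ Ω one has inf_{γ ∈ Γ(X)^ν_{x,Ω^c}} ∫_γ g ds ≤ C_Γ d(x,Ω^c) M_{p,κ d(x,Ω^c)} g(x). -/

import Mathlib

open MeasureTheory Metric Set

section Defs

variable (X : Type*) [MetricSpace X]

/-- A curve, parametrized by arc length on `[0, len]`. -/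
structure Curve where
  len : ℝ
  len_pos : 0 < len
  toFun : ℝ → X
  lip : LipschitzOnWith 1 toFun (Icc 0 len)

variable {X}

/-- The curve integral `∫_γ g ds` (with respect to arc length). -/
noncomputable def Curve.integral (γ : Curve X) (g : X → ℝ) : ℝ :=
  ∫ t in Icc (0:ℝ) γ.len, g (γ.toFun t)

/-- `γ` connects the point `x` to the point `y`. -/
def Curve.Connects (γ : Curve X) (x y : X) : Prop :=
  γ.toFun 0 = x ∧ γ.toFun γ.len = y

/-- `γ` connects the point `x` to the set `E`. -/
def Curve.ConnectsSet (γ : Curve X) (x : X) (E : Set X) : Prop :=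
  γ.toFun 0 = x ∧ γ.toFun γ.len ∈ E

/-- `g` is an upper gradient of `u`: `|u(x) - u(y)| ≤ ∫_γ g ds` for every curve
connecting `x` to `y`. -/
def IsUpperGradient (g u : X → ℝ) : Prop :=
  ∀ γ : Curve X, |u (γ.toFun 0) - u (γ.toFun γ.len)| ≤ γ.integral g

/-- `X` is `C`-quasiconvex: any two distinct points are connected by a curve of
length at most `C` times their distance. -/
def IsQuasiconvex (X : Type*) [MetricSpace X] (C : ℝ) : Prop :=
  ∀ x y : X, x ≠ y → ∃ γ : Curve X, γ.Connects x y ∧ γ.len ≤ C * dist x y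

variable [MeasurableSpace X]

/-- The `r`-restricted maximal function `M_{p,r} f(x)`. -/
noncomputable def restrMax (μ : Measure X) (p r : ℝ) (f : X → ℝ) (x : X) : ℝ :=
  if r = 0 then |f x|
  else sSup { m | ∃ y t, x ∈ ball y t ∧ 0 < t ∧ t < r ∧
    m = (⨍ z in ball y t, |f z| ^ p ∂μ) ^ (1/p) }

/-- `μ` is doubling with constant `D`. -/
def IsDoubling (μ : Measure X) (D : ℝ) : Prop :=
  ∀ (x : X) (r : ℝ), 0 < r → μ (ball x (2*r)) ≤ ENNReal.ofReal D * μ (ball x r)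

/-- All balls have positive finite measure. -/
def BallsPosFinite (μ : Measure X) : Prop :=
  ∀ (x : X) (r : ℝ), 0 < r → 0 < μ (ball x r) ∧ μ (ball x r) < ⊤

/-- The pointwise `p`-Hardy inequality for the open set `Ω`, with constants `C_H`, `κ`. -/
def PointwiseHardy (μ : Measure X) (p : ℝ) (Ω : Set X) (C_H κ : ℝ) : Prop :=
  ∀ u g : X → ℝ, (∃ L, LipschitzWith L u) → (∀ y ∉ Ω, u y = 0) →
    Measurable g → (∀ y, 0 ≤ g y) → (∃ M, ∀ y, g y ≤ M) → IsUpperGradient g u →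
    ∀ x ∈ Ω, |u x| ≤ C_H * infDist x Ωᶜ * restrMax μ p (κ * infDist x Ωᶜ) g x

/-- The `p`-Poincaré inequality on `X` with constants `C`, `lam`. -/
def Poincare (μ : Measure X) (p C lam : ℝ) : Prop :=
  ∀ (x₀ : X) (r : ℝ), 0 < r → ∀ u g : X → ℝ,
    (∃ L, LipschitzWith L u) → Measurable g → (∀ y, 0 ≤ g y) → (∃ M, ∀ y, g y ≤ M) →
    IsUpperGradient g u →
    ⨍ y in ball x₀ r, |u y - ⨍ z in ball x₀ r, u z ∂μ| ∂μ ≤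
      C * r * (⨍ y in ball x₀ (lam * r), (g y) ^ p ∂μ) ^ (1/p)

/-- `inf_{γ ∈ Γ(X)^ν_{x,E}} ∫_γ g ds` : infimum of curve integrals over curves
connecting `x` to `E` of length at most `ν d(x,E)`. -/
noncomputable def curveInfSet (g : X → ℝ) (x : X) (E : Set X) (ν : ℝ) : ℝ :=
  sInf { I | ∃ γ : Curve X, γ.ConnectsSet x E ∧ γ.len ≤ ν * infDist x E ∧ I = γ.integral g }

/-- `inf_{γ ∈ Γ(X)^ν_{x,y}} ∫_γ g ds` : infimum of curve integrals over curves
connecting `x` to `y` of length at most `ν d(x,y)`. -/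
noncomputable def curveInfPt (g : X → ℝ) (x y : X) (ν : ℝ) : ℝ :=
  sInf { I | ∃ γ : Curve X, γ.Connects x y ∧ γ.len ≤ ν * dist x y ∧ I = γ.integral g }

/-- The function `α_{p,Ω}(ν,κ,τ)`. -/
noncomputable def alphaFn (μ : Measure X) (p : ℝ) (Ω : Set X) (ν κ τ : ℝ) : ℝ :=
  sSup { v | ∃ x ∈ Ω, ∃ g : X → ℝ, LowerSemicontinuous g ∧ (∀ y, g y ∈ Icc (0:ℝ) 1) ∧
    restrMax μ p (κ * infDist x Ωᶜ) g x ≤ τ ∧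
    v = curveInfSet g x Ωᶜ ν / infDist x Ωᶜ }

end Defs

/-!
Hardy ⇒ curve condition. Given `g ≥ 0` and `c > M_{p,κd} g(x)`, put `φ = max g c` and let `u` be
the `φ`-length distance to `Ωᶜ`, cut off outside `Ω`. Then `φ` is an upper gradient of `u`, and `u`
is Lipschitz by quasiconvexity, so the Hardy inequality gives `u(x) ≲ d · M φ(x) ≲ c d`. Because
`φ ≥ c`, a curve almost realizing `u(x)` has length `≲ d`, and its `g`-integral is at most its
`φ`-integral.

Curve condition ⇒ Hardy. An upper gradient `g` is only Borel, so replace it by a lower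
semicontinuous majorant `h` on `Ω \ {x}` that vanishes off `Ω` and whose `p`-averages over small
balls through `x` exceed those of `g` by at most `ε`. This uses Vitali–Carathéodory on each dyadic
annulus around `x`, and the doubling property to add up the errors. On any curve from `x` to `Ωᶜ`,
the piece from the last visit of `x` to the first exit runs in `Ω \ {x}`, so `|u(x)| ≤ ∫_γ h`, and
the curve condition for `h` finishes.
-/

open scoped ENNReal

theorem le_mul_of_forall_lt_imp_le_mul {a b K : ℝ} (hK : 0 < K) (h : ∀ c, b < c → a ≤ K * c) :
    a ≤ K * b :=
  le_of_forall_gt_imp_ge_of_dense fun e he => by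
    simpa [mul_div_cancel₀ _ hK.ne'] using h (e / K) (by rwa [lt_div_iff₀' hK])

theorem LowerSemicontinuous.toReal_rpow {α : Type*} [TopologicalSpace α] {H : α → ℝ≥0∞}
    (hH : LowerSemicontinuous H) {C : ℝ≥0∞} (hC : C ≠ ⊤) (hHC : ∀ z, H z ≤ C) {q : ℝ}
    (hq : 0 ≤ q) : LowerSemicontinuous fun z => (H z ^ q).toReal := by
  have hCq : C ^ q ≠ ⊤ := ENNReal.rpow_ne_top_of_nonneg hq hC
  have htrunc : (fun z => (H z ^ q).toReal) = ENNReal.truncateToReal (C ^ q) ∘ (· ^ q) ∘ H :=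
    funext fun z => (ENNReal.truncateToReal_eq_toReal hCq (ENNReal.rpow_le_rpow (hHC z) hq)).symm
  rw [htrunc]
  exact (ENNReal.continuous_truncateToReal hCq).comp_lowerSemicontinuous
    (ENNReal.continuous_rpow_const.comp_lowerSemicontinuous hH (ENNReal.monotone_rpow_of_nonneg hq))
    (ENNReal.monotone_truncateToReal hCq)

theorem LowerSemicontinuous.indicator_of_isOpen {α β : Type*} [TopologicalSpace α] [Preorder β]
    [Zero β] {f : α → β} (hf : LowerSemicontinuous f) (hf0 : ∀ z, 0 ≤ f z) {U : Set α}
    (hU : IsOpen U) : LowerSemicontinuous (U.indicator f) := by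
  intro z y (hy : y < U.indicator f z)
  change ∀ᶠ w in nhds z, y < U.indicator f w
  by_cases hz : z ∈ U
  · rw [indicator_of_mem hz] at hy
    filter_upwards [hU.mem_nhds hz, hf z y hy] with w hw hyw
    rwa [indicator_of_mem hw]
  · rw [indicator_of_notMem hz] at hy
    exact Filter.Eventually.of_forall fun w => hy.trans_le (indicator_nonneg (fun w _ => hf0 w) w)

section Average

variable {X : Type*} [MeasurableSpace X] {μ : Measure X} {p M : ℝ} {f g : X → ℝ}

theorem setAverage_nonneg_of_nonneg {s : Set X} (hf : ∀ z, 0 ≤ f z) : 0 ≤ ⨍ z in s, f z ∂μ := by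
  rw [setAverage_eq, smul_eq_mul]
  exact mul_nonneg (inv_nonneg.2 measureReal_nonneg) (integral_nonneg hf)

theorem setAverage_mono_on {s : Set X} (hs : MeasurableSet s) (hf : IntegrableOn f s μ)
    (hg : IntegrableOn g s μ) (h : ∀ z ∈ s, f z ≤ g z) :
    ⨍ z in s, f z ∂μ ≤ ⨍ z in s, g z ∂μ := by
  rw [setAverage_eq, setAverage_eq, smul_eq_mul, smul_eq_mul]
  exact mul_le_mul_of_nonneg_left (setIntegral_mono_on hf hg hs h)
    (inv_nonneg.2 measureReal_nonneg)

theorem setAverage_add_const {s : Set X} (hs0 : μ s ≠ 0) (hs : μ s ≠ ⊤)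
    (hf : IntegrableOn f s μ) (c : ℝ) : ⨍ z in s, (f z + c) ∂μ = ⨍ z in s, f z ∂μ + c := by
  have hc := setAverage_const hs0 hs c
  rw [setAverage_eq] at hc ⊢
  rw [setAverage_eq, integral_add hf (integrableOn_const hs), smul_add, hc]

theorem integrableOn_abs_rpow (hf : Measurable f) (hM : ∀ y, |f y| ≤ M) (hp : 0 ≤ p)
    {s : Set X} (hs : μ s ≠ ⊤) : IntegrableOn (fun z => |f z| ^ p) s μ :=
  Integrable.mono' (integrableOn_const hs (C := M ^ p)) (hf.abs.pow_const p).aestronglyMeasurable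
    (ae_of_all _ fun z => by
      rw [Real.norm_of_nonneg (by positivity)]
      exact Real.rpow_le_rpow (abs_nonneg _) (hM z) hp)

theorem setLIntegral_iSup_le_add_tsum {G : X → ℝ≥0∞} (hG : Measurable G) {F : ℕ → X → ℝ≥0∞}
    (hF : ∀ k, Measurable (F k)) (s : Set X) :
    ∫⁻ z in s, ⨆ k, F k z ∂μ ≤ ∫⁻ z in s, G z ∂μ + ∑' k, ∫⁻ z in s, F k z - G z ∂μ := by
  calc ∫⁻ z in s, ⨆ k, F k z ∂μ ≤ ∫⁻ z in s, G z + ∑' k, (F k z - G z) ∂μ :=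
        lintegral_mono fun z => iSup_le fun k => le_add_tsub.trans
          (add_le_add le_rfl (ENNReal.le_tsum (f := fun k => F k z - G z) k))
    _ = ∫⁻ z in s, G z ∂μ + ∑' k, ∫⁻ z in s, F k z - G z ∂μ := by
        rw [lintegral_add_left hG,
          lintegral_tsum (f := fun k z => F k z - G z) fun k => ((hF k).sub hG).aemeasurable]

theorem setLAverage_le_add_of_setLIntegral_le {s : Set X} (hs0 : μ s ≠ 0) (hs : μ s ≠ ⊤)
    {F G : X → ℝ≥0∞} {ε : ℝ≥0∞} (h : ∫⁻ z in s, F z ∂μ ≤ ∫⁻ z in s, G z ∂μ + ε * μ s) :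
    ⨍⁻ z in s, F z ∂μ ≤ ⨍⁻ z in s, G z ∂μ + ε := by
  rw [setLAverage_eq, setLAverage_eq, ← ENNReal.mul_div_cancel_right hs0 hs (a := ε),
    ← ENNReal.add_div]
  gcongr

theorem setAverage_toReal_le_add {s : Set X} {F G : X → ℝ≥0∞} (hF : AEMeasurable F (μ.restrict s))
    (hG : AEMeasurable G (μ.restrict s)) (hFtop : ∀ z, F z ≠ ⊤) (hGtop : ∀ z, G z ≠ ⊤)
    (hGav : ⨍⁻ z in s, G z ∂μ ≠ ⊤) {η : ℝ} (hη : 0 ≤ η)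
    (h : ⨍⁻ z in s, F z ∂μ ≤ ⨍⁻ z in s, G z ∂μ + ENNReal.ofReal η) :
    ⨍ z in s, (F z).toReal ∂μ ≤ ⨍ z in s, (G z).toReal ∂μ + η := by
  rw [← toReal_setLAverage hF (ae_of_all _ hFtop), ← toReal_setLAverage hG (ae_of_all _ hGtop),
    ← ENNReal.toReal_ofReal hη, ← ENNReal.toReal_add hGav ENNReal.ofReal_ne_top]
  exact ENNReal.toReal_mono (ENNReal.add_ne_top.2 ⟨hGav, ENNReal.ofReal_ne_top⟩) h

end Average

namespace Curve

variable {X : Type*} [MetricSpace X] {g : X → ℝ}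

theorem dist_le (γ : Curve X) {s t : ℝ} (hs : s ∈ Icc 0 γ.len) (ht : t ∈ Icc 0 γ.len)
    (hst : s ≤ t) : dist (γ.toFun s) (γ.toFun t) ≤ t - s := by
  simpa [Real.dist_eq, abs_of_nonpos (sub_nonpos.2 hst)] using γ.lip.dist_le_mul s hs t ht

theorem dist_toFun_zero_len_le (γ : Curve X) : dist (γ.toFun 0) (γ.toFun γ.len) ≤ γ.len := by
  simpa using γ.dist_le (left_mem_Icc.2 γ.len_pos.le) (right_mem_Icc.2 γ.len_pos.le)
    γ.len_pos.le

theorem lipschitzOnWith_one_of_dist_le {f : ℝ → X} {a : ℝ}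
    (h : ∀ s ∈ Icc 0 a, ∀ t ∈ Icc 0 a, s ≤ t → dist (f s) (f t) ≤ t - s) :
    LipschitzOnWith 1 f (Icc 0 a) := by
  refine LipschitzOnWith.of_dist_le_mul fun s hs t ht => ?_
  rcases le_total s t with hst | hts
  · simpa [Real.dist_eq, abs_of_nonpos (sub_nonpos.2 hst)] using h s hs t ht hst
  · simpa [Real.dist_eq, abs_of_nonneg (sub_nonneg.2 hts), dist_comm] using h t ht s hs hts

noncomputable def concat (γ σ : Curve X) (hσ : σ.toFun 0 = γ.toFun γ.len) : Curve X where
  len := γ.len + σ.len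
  len_pos := add_pos γ.len_pos σ.len_pos
  toFun t := if t ≤ γ.len then γ.toFun t else σ.toFun (t - γ.len)
  lip := lipschitzOnWith_one_of_dist_le fun s hs t ht hst => by
    by_cases ht₁ : t ≤ γ.len
    · simp only [if_pos ht₁, if_pos (hst.trans ht₁)]
      exact γ.dist_le ⟨hs.1, hst.trans ht₁⟩ ⟨hs.1.trans hst, ht₁⟩ hst
    have hσt : t - γ.len ∈ Icc 0 σ.len := ⟨by linarith, by linarith [ht.2]⟩
    by_cases hs₁ : s ≤ γ.len
    · simp only [if_pos hs₁, if_neg ht₁]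
      calc dist (γ.toFun s) (σ.toFun (t - γ.len))
          ≤ dist (γ.toFun s) (γ.toFun γ.len) + dist (σ.toFun 0) (σ.toFun (t - γ.len)) := by
            rw [hσ]; exact dist_triangle _ _ _
        _ ≤ (γ.len - s) + (t - γ.len - 0) :=
            add_le_add (γ.dist_le ⟨hs.1, hs₁⟩ (right_mem_Icc.2 γ.len_pos.le) hs₁)
              (σ.dist_le (left_mem_Icc.2 σ.len_pos.le) hσt hσt.1)
        _ = t - s := by ring
    · simp only [if_neg hs₁, if_neg ht₁]
      simpa using σ.dist_le (s := s - γ.len) ⟨by linarith, by linarith [hs.2]⟩ hσt (by linarith)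

theorem concat_toFun_zero (γ σ : Curve X) (hσ : σ.toFun 0 = γ.toFun γ.len) :
    (γ.concat σ hσ).toFun 0 = γ.toFun 0 :=
  if_pos γ.len_pos.le

theorem concat_toFun_len (γ σ : Curve X) (hσ : σ.toFun 0 = γ.toFun γ.len) :
    (γ.concat σ hσ).toFun (γ.concat σ hσ).len = σ.toFun σ.len := by
  simp [concat, σ.len_pos]

noncomputable def reverse (γ : Curve X) : Curve X where
  len := γ.len
  len_pos := γ.len_pos
  toFun t := γ.toFun (γ.len - t)
  lip := lipschitzOnWith_one_of_dist_le fun s hs t ht hst => by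
    rw [dist_comm]
    simpa using γ.dist_le (s := γ.len - t) (t := γ.len - s) ⟨by linarith [ht.2], by linarith [ht.1]⟩
      ⟨by linarith [hs.2], by linarith [hs.1]⟩ (by linarith)

theorem reverse_toFun_zero (γ : Curve X) : γ.reverse.toFun 0 = γ.toFun γ.len := by
  simp [reverse]

theorem reverse_toFun_len (γ : Curve X) : γ.reverse.toFun γ.reverse.len = γ.toFun 0 := by
  simp [reverse]

noncomputable def restrict (γ : Curve X) {a b : ℝ} (ha : 0 ≤ a) (hab : a < b) (hb : b ≤ γ.len) :
    Curve X where
  len := b - a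
  len_pos := sub_pos.2 hab
  toFun t := γ.toFun (t + a)
  lip := lipschitzOnWith_one_of_dist_le fun s hs t ht hst => by
    simpa using γ.dist_le (s := s + a) (t := t + a) ⟨by linarith [hs.1], by linarith [hs.2]⟩
      ⟨by linarith [ht.1], by linarith [ht.2]⟩ (by linarith)

theorem restrict_toFun_zero (γ : Curve X) {a b : ℝ} (ha : 0 ≤ a) (hab : a < b)
    (hb : b ≤ γ.len) : (γ.restrict ha hab hb).toFun 0 = γ.toFun a := by
  simp [restrict]

theorem restrict_toFun_len (γ : Curve X) {a b : ℝ} (ha : 0 ≤ a) (hab : a < b)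
    (hb : b ≤ γ.len) : (γ.restrict ha hab hb).toFun (γ.restrict ha hab hb).len = γ.toFun b := by
  simp [restrict]

theorem exists_last_visit_first_exit (γ : Curve X) {Ω : Set X} (hΩ : IsOpen Ω) {x : X}
    (hx : x ∈ Ω) (hγ : γ.ConnectsSet x Ωᶜ) :
    ∃ t₁ t₀, 0 ≤ t₁ ∧ t₁ < t₀ ∧ t₀ ≤ γ.len ∧ γ.toFun t₁ = x ∧ γ.toFun t₀ ∉ Ω ∧
      ∀ t ∈ Ioo t₁ t₀, γ.toFun t ∈ Ω ∧ γ.toFun t ≠ x := by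
  have hcont := γ.lip.continuousOn
  set T := Icc 0 γ.len ∩ γ.toFun ⁻¹' Ωᶜ
  have hT : IsClosed T := hcont.preimage_isClosed_of_isClosed isClosed_Icc hΩ.isClosed_compl
  have hTbdd : BddBelow T := ⟨0, fun t ht => ht.1.1⟩
  have ht₀ : sInf T ∈ T := hT.csInf_mem ⟨γ.len, right_mem_Icc.2 γ.len_pos.le, hγ.2⟩ hTbdd
  set t₀ := sInf T
  set T' := Icc 0 t₀ ∩ γ.toFun ⁻¹' {x}
  have hT' : IsClosed T' := (hcont.mono (Icc_subset_Icc le_rfl ht₀.1.2))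
    |>.preimage_isClosed_of_isClosed isClosed_Icc isClosed_singleton
  have hT'bdd : BddAbove T' := ⟨t₀, fun t ht => ht.1.2⟩
  have ht₁ : sSup T' ∈ T' := hT'.csSup_mem ⟨0, ⟨le_rfl, ht₀.1.1⟩, hγ.1⟩ hT'bdd
  have hlt : sSup T' < t₀ := lt_of_le_of_ne ht₁.1.2 fun h => ht₀.2 (h ▸ ht₁.2 ▸ hx)
  refine ⟨sSup T', t₀, ht₁.1.1, hlt, ht₀.1.2, ht₁.2, ht₀.2, fun t ht => ⟨?_, ?_⟩⟩
  · by_contra hΩt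
    exact (csInf_le hTbdd ⟨⟨ht₁.1.1.trans ht.1.le, ht.2.le.trans ht₀.1.2⟩, hΩt⟩).not_gt ht.2
  · intro hxt
    exact (le_csSup hT'bdd ⟨⟨ht₁.1.1.trans ht.1.le, ht.2.le⟩, hxt⟩).not_gt ht.1

theorem integral_const (γ : Curve X) (c : ℝ) : γ.integral (fun _ => c) = c * γ.len := by
  simp [Curve.integral, γ.len_pos.le, mul_comm]

theorem integral_nonneg (γ : Curve X) (hg : ∀ y, 0 ≤ g y) : 0 ≤ γ.integral g :=
  setIntegral_nonneg measurableSet_Icc fun _ _ => hg _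

theorem integral_reverse (γ : Curve X) (g : X → ℝ) : γ.reverse.integral g = γ.integral g := by
  unfold Curve.integral
  rw [show γ.reverse.len = γ.len from rfl, integral_Icc_eq_integral_Ioc,
    ← intervalIntegral.integral_of_le γ.len_pos.le]
  simp only [reverse]
  rw [intervalIntegral.integral_comp_sub_left (fun t => g (γ.toFun t)), sub_self, sub_zero,
    intervalIntegral.integral_of_le γ.len_pos.le, integral_Icc_eq_integral_Ioc]

theorem integral_restrict (γ : Curve X) {a b : ℝ} (ha : 0 ≤ a) (hab : a < b) (hb : b ≤ γ.len)
    (g : X → ℝ) : (γ.restrict ha hab hb).integral g = ∫ t in Icc a b, g (γ.toFun t) := by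
  unfold Curve.integral
  rw [show (γ.restrict ha hab hb).len = b - a from rfl, integral_Icc_eq_integral_Ioc,
    ← intervalIntegral.integral_of_le (sub_pos.2 hab).le]
  simp only [restrict]
  rw [intervalIntegral.integral_comp_add_right (fun t => g (γ.toFun t)), zero_add, sub_add_cancel,
    intervalIntegral.integral_of_le hab.le, integral_Icc_eq_integral_Ioc]

variable [MeasurableSpace X] [BorelSpace X] {g₁ g₂ : X → ℝ} {M : ℝ}

theorem integrableOn_comp (γ : Curve X) (hg : Measurable g) (hM : ∀ y, |g y| ≤ M) {s : Set ℝ}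
    (hs : MeasurableSet s) (hsγ : s ⊆ Icc 0 γ.len) : IntegrableOn (fun t => g (γ.toFun t)) s := by
  have hμs : volume s ≠ ⊤ := ((measure_mono hsγ).trans_lt (by simp)).ne
  refine Integrable.mono' (integrableOn_const hμs (C := M)) ?_ (ae_of_all _ fun t => hM _)
  exact (hg.comp_aemeasurable ((γ.lip.continuousOn.mono hsγ).aemeasurable hs)).aestronglyMeasurable

theorem integral_mono (γ : Curve X) (hg₁ : Measurable g₁) (hg₂ : Measurable g₂)
    (hM₁ : ∀ y, |g₁ y| ≤ M) (hM₂ : ∀ y, |g₂ y| ≤ M) (h : ∀ y, g₁ y ≤ g₂ y) :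
    γ.integral g₁ ≤ γ.integral g₂ :=
  setIntegral_mono_on (γ.integrableOn_comp hg₁ hM₁ measurableSet_Icc le_rfl)
    (γ.integrableOn_comp hg₂ hM₂ measurableSet_Icc le_rfl) measurableSet_Icc fun _ _ => h _

theorem mul_len_le_integral (γ : Curve X) (hg : Measurable g) (hM : ∀ y, |g y| ≤ M) {c : ℝ}
    (hc : ∀ y, c ≤ g y) : c * γ.len ≤ γ.integral g := by
  have hcM : |c| ≤ max M |c| := le_max_right _ _
  rw [← γ.integral_const]
  exact γ.integral_mono measurable_const hg (fun _ => hcM)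
    (fun y => (hM y).trans (le_max_left _ _)) hc

theorem integral_le_mul_len (γ : Curve X) (hg : Measurable g) (hM : ∀ y, |g y| ≤ M) {c : ℝ}
    (hc : ∀ y, g y ≤ c) : γ.integral g ≤ c * γ.len := by
  have hcM : |c| ≤ max M |c| := le_max_right _ _
  rw [← γ.integral_const]
  exact γ.integral_mono hg measurable_const
    (fun y => (hM y).trans (le_max_left _ _)) (fun _ => hcM) hc

theorem integral_concat (γ σ : Curve X) (hσ : σ.toFun 0 = γ.toFun γ.len) (hg : Measurable g)
    (hM : ∀ y, |g y| ≤ M) : (γ.concat σ hσ).integral g = γ.integral g + σ.integral g := by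
  have hsplit : Icc 0 (γ.len + σ.len) = Icc 0 γ.len ∪ Ioc γ.len (γ.len + σ.len) :=
    (Icc_union_Ioc_eq_Icc γ.len_pos.le (by linarith [σ.len_pos])).symm
  have hint (s : Set ℝ) (hs : MeasurableSet s) (hsγ : s ⊆ Icc 0 (γ.len + σ.len)) :=
    (γ.concat σ hσ).integrableOn_comp hg hM hs hsγ
  have hσpart : ∫ t in Ioc γ.len (γ.len + σ.len), g ((γ.concat σ hσ).toFun t)
      = ∫ t in Ioc γ.len (γ.len + σ.len), g (σ.toFun (t - γ.len)) :=
    setIntegral_congr_fun measurableSet_Ioc fun t ht => by simp [concat, not_le.2 ht.1]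
  unfold Curve.integral
  rw [show (γ.concat σ hσ).len = γ.len + σ.len from rfl, hsplit,
    setIntegral_union ((Iic_disjoint_Ioc le_rfl).mono_left Icc_subset_Iic_self) measurableSet_Ioc
      (hint _ measurableSet_Icc (hsplit ▸ subset_union_left))
      (hint _ measurableSet_Ioc (hsplit ▸ subset_union_right)), hσpart,
    ← intervalIntegral.integral_of_le (by linarith [σ.len_pos]),
    intervalIntegral.integral_comp_sub_right (fun t => g (σ.toFun t)), sub_self,
    add_sub_cancel_left, intervalIntegral.integral_of_le σ.len_pos.le,
    ← integral_Icc_eq_integral_Ioc]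
  congr 1
  exact setIntegral_congr_fun measurableSet_Icc fun t ht => by simp [concat, ht.2]

end Curve

section UpperGradient

variable {X : Type*} [MetricSpace X] {C : ℝ}

theorem isUpperGradient_of_le_integral_add {g u : X → ℝ}
    (h : ∀ γ : Curve X, u (γ.toFun 0) ≤ γ.integral g + u (γ.toFun γ.len)) :
    IsUpperGradient g u := fun γ => by
  have hrev := h γ.reverse
  rw [γ.reverse_toFun_zero, γ.reverse_toFun_len, γ.integral_reverse] at hrev
  rw [abs_sub_le_iff]
  constructor <;> linarith [h γ]

theorem IsQuasiconvex.one_le (hQC : IsQuasiconvex X C) {a b : X} (hab : a ≠ b) : 1 ≤ C := by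
  obtain ⟨γ, ⟨rfl, rfl⟩, hlen⟩ := hQC a b hab
  have hd : 0 < dist (γ.toFun 0) (γ.toFun γ.len) := dist_pos.2 hab
  nlinarith [γ.dist_toFun_zero_len_le]

theorem IsQuasiconvex.exists_curve_connectsSet_len_le (hQC : IsQuasiconvex X C) {E : Set X}
    (hE : IsClosed E) (hEne : E.Nonempty) {x : X} (hx : x ∉ E) {ν : ℝ} (hν : C < ν) :
    ∃ γ : Curve X, γ.ConnectsSet x E ∧ γ.len ≤ ν * infDist x E := by
  obtain ⟨e, he⟩ := hEne
  have hC : 0 < C := one_pos.trans_le (hQC.one_le (ne_of_mem_of_not_mem he hx).symm)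
  have hd : 0 < infDist x E := (hE.notMem_iff_infDist_pos ⟨e, he⟩).1 hx
  have hlt : infDist x E < ν / C * infDist x E := by
    rw [lt_mul_iff_one_lt_left hd, one_lt_div hC]; exact hν
  obtain ⟨z, hz, hxz⟩ := (infDist_lt_iff ⟨e, he⟩).1 hlt
  obtain ⟨γ, ⟨h0, hlen⟩, hγ⟩ := hQC x z (ne_of_mem_of_not_mem hz hx).symm
  refine ⟨γ, ⟨h0, hlen ▸ hz⟩, hγ.trans ?_⟩
  calc C * dist x z ≤ C * (ν / C * infDist x E) := by gcongr
    _ = ν * infDist x E := by field_simp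

variable [MeasurableSpace X] [BorelSpace X]

theorem IsUpperGradient.lipschitzWith (hQC : IsQuasiconvex X C) {g u : X → ℝ}
    (hu : IsUpperGradient g u) (hg : Measurable g) {M : ℝ} (hM : ∀ y, |g y| ≤ M) :
    LipschitzWith (M * C).toNNReal u := by
  refine LipschitzWith.of_dist_le' fun a b => ?_
  rcases eq_or_ne a b with rfl | hab
  · simp
  obtain ⟨γ, ⟨rfl, rfl⟩, hlen⟩ := hQC _ _ hab
  have hM0 : 0 ≤ M := (abs_nonneg _).trans (hM (γ.toFun 0))
  calc dist (u (γ.toFun 0)) (u (γ.toFun γ.len)) ≤ γ.integral g := hu γ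
    _ ≤ M * γ.len := γ.integral_le_mul_len hg hM fun y => (le_abs_self _).trans (hM y)
    _ ≤ M * C * dist (γ.toFun 0) (γ.toFun γ.len) := by
        rw [mul_assoc]; exact mul_le_mul_of_nonneg_left hlen hM0

end UpperGradient

section MaximalFunction

variable {X : Type*} [MetricSpace X] [MeasurableSpace X] {μ : Measure X} {p r : ℝ}
  {f g : X → ℝ} {x : X} {M : ℝ}

theorem restrMax_of_pos (hr : 0 < r) : restrMax μ p r f x = sSup { m | ∃ y t, x ∈ ball y t ∧
    0 < t ∧ t < r ∧ m = (⨍ z in ball y t, |f z| ^ p ∂μ) ^ (1/p) } :=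
  if_neg hr.ne'

theorem restrMax_le (hr : 0 < r) {c : ℝ} (hc : 0 ≤ c)
    (h : ∀ y t, x ∈ ball y t → t < r → (⨍ z in ball y t, |f z| ^ p ∂μ) ^ (1/p) ≤ c) :
    restrMax μ p r f x ≤ c := by
  rw [restrMax_of_pos hr]
  exact Real.sSup_le (fun m ⟨y, t, hx, _, htr, hm⟩ => hm ▸ h y t hx htr) hc

theorem restrMax_nonneg (hr : 0 < r) : 0 ≤ restrMax μ p r f x := by
  rw [restrMax_of_pos hr]
  exact Real.sSup_nonneg fun m ⟨y, t, _, _, _, hm⟩ =>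
    hm ▸ Real.rpow_nonneg (setAverage_nonneg_of_nonneg fun _ => by positivity) _

variable [OpensMeasurableSpace X]

theorem le_restrMax (hball : BallsPosFinite μ) (hf : Measurable f) (hM : ∀ y, |f y| ≤ M)
    (hp : 0 < p) {y : X} {t : ℝ} (hx : x ∈ ball y t) (htr : t < r) :
    (⨍ z in ball y t, |f z| ^ p ∂μ) ^ (1/p) ≤ restrMax μ p r f x := by
  have hM0 : 0 ≤ M := (abs_nonneg _).trans (hM x)
  have hbdd : BddAbove { m | ∃ y t, x ∈ ball y t ∧ 0 < t ∧ t < r ∧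
      m = (⨍ z in ball y t, |f z| ^ p ∂μ) ^ (1/p) } := by
    refine ⟨M, fun m ⟨y, t, _, ht, _, hm⟩ => hm ▸ ?_⟩
    have hμ := hball y t ht
    calc (⨍ z in ball y t, |f z| ^ p ∂μ) ^ (1/p) ≤ (⨍ _ in ball y t, M ^ p ∂μ) ^ (1/p) := by
          gcongr
          · exact setAverage_nonneg_of_nonneg fun _ => by positivity
          · exact setAverage_mono_on measurableSet_ball
              (integrableOn_abs_rpow hf hM hp.le hμ.2.ne) (integrableOn_const hμ.2.ne)
              fun z _ => Real.rpow_le_rpow (abs_nonneg _) (hM z) hp.le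
      _ = M := by
          rw [setAverage_const hμ.1.ne' hμ.2.ne, one_div, Real.rpow_rpow_inv hM0 hp.ne']
  rw [restrMax_of_pos ((pos_of_mem_ball hx).trans htr)]
  exact le_csSup hbdd ⟨y, t, hx, pos_of_mem_ball hx, htr, rfl⟩

theorem restrMax_le_add (hball : BallsPosFinite μ) (hp : 1 ≤ p) (hr : 0 < r) (hg : Measurable g)
    (hgM : ∀ y, |g y| ≤ M) {c : ℝ} (hc : 0 ≤ c)
    (h : ∀ y t, x ∈ ball y t → t < r →
      ⨍ z in ball y t, |f z| ^ p ∂μ ≤ ⨍ z in ball y t, |g z| ^ p ∂μ + c ^ p) :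
    restrMax μ p r f x ≤ restrMax μ p r g x + c := by
  have hp0 : 0 < p := one_pos.trans_le hp
  refine restrMax_le hr (add_nonneg (restrMax_nonneg hr) hc) fun y t hx htr => ?_
  have hg0 : 0 ≤ ⨍ z in ball y t, |g z| ^ p ∂μ :=
    setAverage_nonneg_of_nonneg fun _ => by positivity
  calc (⨍ z in ball y t, |f z| ^ p ∂μ) ^ (1/p)
      ≤ (⨍ z in ball y t, |g z| ^ p ∂μ + c ^ p) ^ (1/p) := by
        gcongr
        · exact setAverage_nonneg_of_nonneg fun _ => by positivity
        · exact h y t hx htr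
    _ ≤ (⨍ z in ball y t, |g z| ^ p ∂μ) ^ (1/p) + (c ^ p) ^ (1/p) :=
        Real.rpow_add_le_add_rpow hg0 (by positivity) (by positivity)
          ((div_le_one hp0).2 hp)
    _ = (⨍ z in ball y t, |g z| ^ p ∂μ) ^ (1/p) + c := by
        rw [one_div, Real.rpow_rpow_inv hc hp0.ne']
    _ ≤ restrMax μ p r g x + c := by
        gcongr; exact le_restrMax hball hg hgM hp0 hx htr

end MaximalFunction

section CurveInfimum

variable {X : Type*} [MetricSpace X] {φ : X → ℝ} {x : X} {E : Set X}

theorem curveInfSet_le_integral (hφ : ∀ y, 0 ≤ φ y) {ν : ℝ} {γ : Curve X}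
    (hγ : γ.ConnectsSet x E) (hlen : γ.len ≤ ν * infDist x E) :
    curveInfSet φ x E ν ≤ γ.integral φ :=
  csInf_le ⟨0, fun _ ⟨σ, _, _, hI⟩ => hI ▸ σ.integral_nonneg hφ⟩ ⟨γ, hγ, hlen, rfl⟩

theorem le_curveInfSet {ν c : ℝ} (hne : ∃ γ : Curve X, γ.ConnectsSet x E ∧ γ.len ≤ ν * infDist x E)
    (h : ∀ γ : Curve X, γ.ConnectsSet x E → c ≤ γ.integral φ) : c ≤ curveInfSet φ x E ν :=
  let ⟨γ, hγ⟩ := hne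
  le_csInf ⟨_, γ, hγ.1, hγ.2, rfl⟩ fun _ ⟨γ, hγ, _, hI⟩ => hI ▸ h γ hγ

noncomputable def weightedDist (φ : X → ℝ) (y : X) (E : Set X) : ℝ :=
  sInf {I | ∃ γ : Curve X, γ.ConnectsSet y E ∧ I = γ.integral φ}

theorem weightedDist_nonneg (hφ : ∀ y, 0 ≤ φ y) : 0 ≤ weightedDist φ x E :=
  Real.sInf_nonneg fun _ ⟨γ, _, hI⟩ => hI ▸ γ.integral_nonneg hφ

theorem weightedDist_le_integral (hφ : ∀ y, 0 ≤ φ y) {γ : Curve X} (hγ : γ.ConnectsSet x E) :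
    weightedDist φ x E ≤ γ.integral φ :=
  csInf_le ⟨0, fun _ ⟨σ, _, hI⟩ => hI ▸ σ.integral_nonneg hφ⟩ ⟨γ, hγ, rfl⟩

theorem exists_integral_lt_weightedDist_add
    (hne : ∃ γ : Curve X, γ.ConnectsSet x E) {ε : ℝ} (hε : 0 < ε) :
    ∃ γ : Curve X, γ.ConnectsSet x E ∧ γ.integral φ < weightedDist φ x E + ε := by
  obtain ⟨γ₀, hγ₀⟩ := hne
  obtain ⟨_, ⟨γ, hγ, rfl⟩, hlt⟩ := Real.lt_sInf_add_pos
    (s := {I | ∃ γ : Curve X, γ.ConnectsSet x E ∧ I = γ.integral φ}) ⟨_, γ₀, hγ₀, rfl⟩ hε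
  exact ⟨γ, hγ, hlt⟩

variable [MeasurableSpace X] [BorelSpace X]

theorem weightedDist_le_integral_add (hφ0 : ∀ y, 0 ≤ φ y) (hφ : Measurable φ) {M : ℝ}
    (hM : ∀ y, |φ y| ≤ M) (γ : Curve X) (hne : ∃ σ : Curve X, σ.ConnectsSet (γ.toFun γ.len) E) :
    weightedDist φ (γ.toFun 0) E ≤ γ.integral φ + weightedDist φ (γ.toFun γ.len) E := by
  obtain ⟨σ₀, hσ₀⟩ := hne
  rw [← sub_le_iff_le_add']
  refine le_csInf ⟨_, σ₀, hσ₀, rfl⟩ fun _ ⟨σ, hσ, hI⟩ => hI ▸ ?_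
  have hconcat := weightedDist_le_integral hφ0 (γ := γ.concat σ hσ.1)
    ⟨γ.concat_toFun_zero σ hσ.1, (γ.concat_toFun_len σ hσ.1).symm ▸ hσ.2⟩
  rw [γ.integral_concat σ hσ.1 hφ hM] at hconcat
  linarith

theorem isUpperGradient_indicator_weightedDist {C : ℝ} (hQC : IsQuasiconvex X C) {Ω : Set X}
    (hΩ : IsOpen Ω) (hΩc : Ωᶜ.Nonempty) (hφ0 : ∀ y, 0 ≤ φ y) (hφ : Measurable φ) {M : ℝ}
    (hM : ∀ y, |φ y| ≤ M) : IsUpperGradient φ (Ω.indicator fun y => weightedDist φ y Ωᶜ) := by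
  refine isUpperGradient_of_le_integral_add fun γ => ?_
  by_cases ha : γ.toFun 0 ∈ Ω
  · by_cases hb : γ.toFun γ.len ∈ Ω
    · simp only [indicator_of_mem ha, indicator_of_mem hb]
      obtain ⟨σ, hσ, -⟩ := hQC.exists_curve_connectsSet_len_le hΩ.isClosed_compl hΩc
        (not_not.2 hb) (lt_add_one C)
      exact weightedDist_le_integral_add hφ0 hφ hM γ ⟨σ, hσ⟩
    · simp only [indicator_of_mem ha, indicator_of_notMem hb, add_zero]
      exact weightedDist_le_integral hφ0 ⟨rfl, hb⟩
  · rw [indicator_of_notMem ha]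
    exact add_nonneg (γ.integral_nonneg hφ0)
      (indicator_nonneg (fun _ _ => weightedDist_nonneg hφ0) _)

end CurveInfimum

section HardyImpliesCurveCondition

variable {X : Type*} [MetricSpace X] [MeasurableSpace X] [BorelSpace X] {μ : Measure X}
  {C_QC C_H κ p ν M : ℝ} {Ω : Set X} {g : X → ℝ} {x : X}

theorem restrMax_max_const_le (hball : BallsPosFinite μ) (hp : 1 ≤ p) {r : ℝ} (hr : 0 < r)
    (hg : Measurable g) (hg0 : ∀ y, 0 ≤ g y) (hgM : ∀ y, g y ≤ M) {c : ℝ} (hc : 0 ≤ c) :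
    restrMax μ p r (fun y => max (g y) c) x ≤ restrMax μ p r g x + c := by
  have hp0 : 0 ≤ p := zero_le_one.trans hp
  have habs : ∀ y, |g y| ≤ M := fun y => (abs_of_nonneg (hg0 y)).trans_le (hgM y)
  refine restrMax_le_add hball hp hr hg habs hc fun y t hx _ => ?_
  have hμ := hball y t (pos_of_mem_ball hx)
  have hint := integrableOn_abs_rpow hg habs hp0 hμ.2.ne
  rw [← setAverage_add_const hμ.1.ne' hμ.2.ne hint]
  refine setAverage_mono_on measurableSet_ball
    (integrableOn_abs_rpow (hg.max measurable_const) (M := max M c)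
      (fun z => by rw [abs_of_nonneg (le_max_of_le_right hc)]; exact max_le_max (hgM z) le_rfl)
      hp0 hμ.2.ne)
    (hint.add (integrableOn_const hμ.2.ne)) fun z _ => ?_
  rcases max_cases (g z) c with ⟨h, -⟩ | ⟨h, -⟩ <;> rw [h]
  · exact le_add_of_nonneg_right (by positivity)
  · rw [abs_of_nonneg hc]; exact le_add_of_nonneg_left (by positivity)

theorem curveInfSet_le_of_pointwiseHardy_of_lt (hQC : IsQuasiconvex X C_QC)
    (hball : BallsPosFinite μ) (hp : 1 ≤ p) (hΩ : IsOpen Ω) (hΩc : Ωᶜ.Nonempty) (hCH : 0 ≤ C_H)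
    (hκ : 0 < κ) (hH : PointwiseHardy μ p Ω C_H κ) (hν : 2 * C_H + 1 ≤ ν) (hg : Measurable g)
    (hg0 : ∀ y, 0 ≤ g y) (hgM : ∀ y, g y ≤ M) (hx : x ∈ Ω) {c : ℝ}
    (hc : restrMax μ p (κ * infDist x Ωᶜ) g x < c) :
    curveInfSet g x Ωᶜ ν ≤ (2 * C_H + 1) * infDist x Ωᶜ * c := by
  set d := infDist x Ωᶜ
  have hd : 0 < d := (hΩ.isClosed_compl.notMem_iff_infDist_pos hΩc).1 (not_not.2 hx)
  have hδ : 0 ≤ restrMax μ p (κ * d) g x := restrMax_nonneg (mul_pos hκ hd)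
  have hc0 : 0 < c := hδ.trans_lt hc
  set φ : X → ℝ := fun y => max (g y) c
  have hφ : Measurable φ := hg.max measurable_const
  have hφ0 : ∀ y, 0 ≤ φ y := fun y => le_max_of_le_right hc0.le
  have hφM : ∀ y, |φ y| ≤ max M c := fun y => by
    rw [abs_of_nonneg (hφ0 y)]; exact max_le_max (hgM y) le_rfl
  have hug := isUpperGradient_indicator_weightedDist hQC hΩ hΩc hφ0 hφ hφM
  have hW : weightedDist φ x Ωᶜ ≤ C_H * d * (2 * c) := by
    have hHx := hH _ φ ⟨_, hug.lipschitzWith hQC hφ hφM⟩ (fun y hy => indicator_of_notMem hy _)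
      hφ hφ0 ⟨_, fun y => (le_abs_self _).trans (hφM y)⟩ hug x hx
    rw [indicator_of_mem hx] at hHx
    calc weightedDist φ x Ωᶜ ≤ C_H * d * restrMax μ p (κ * d) φ x := (le_abs_self _).trans hHx
      _ ≤ C_H * d * (2 * c) := by
        gcongr
        linarith [restrMax_max_const_le hball hp (mul_pos hκ hd) hg hg0 hgM hc0.le (x := x)]
  obtain ⟨γ₀, hγ₀, -⟩ := hQC.exists_curve_connectsSet_len_le hΩ.isClosed_compl hΩc
    (not_not.2 hx) (lt_add_one C_QC)
  obtain ⟨γ, hγ, hγφ⟩ := exists_integral_lt_weightedDist_add (φ := φ) ⟨γ₀, hγ₀⟩ (mul_pos hc0 hd)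
  have hγφ' : γ.integral φ < (2 * C_H + 1) * d * c := by nlinarith
  -- Since `φ ≥ c`, an almost minimizing curve is short.
  have hlen : γ.len ≤ ν * d := by
    have := γ.mul_len_le_integral hφ hφM fun y => le_max_right (g y) c
    have : γ.len < (2 * C_H + 1) * d := by nlinarith
    nlinarith
  calc curveInfSet g x Ωᶜ ν ≤ γ.integral g := curveInfSet_le_integral hg0 hγ hlen
    _ ≤ γ.integral φ := γ.integral_mono hg hφ (M := max M c)
        (fun y => (abs_of_nonneg (hg0 y)).trans_le ((hgM y).trans (le_max_left _ _)))
        hφM fun y => le_max_left _ _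
    _ ≤ (2 * C_H + 1) * d * c := hγφ'.le

theorem curveInfSet_le_of_pointwiseHardy (hQC : IsQuasiconvex X C_QC)
    (hball : BallsPosFinite μ) (hp : 1 ≤ p) (hΩ : IsOpen Ω) (hΩc : Ωᶜ.Nonempty) (hCH : 0 ≤ C_H)
    (hκ : 0 < κ) (hH : PointwiseHardy μ p Ω C_H κ) (hν : 2 * C_H + 1 ≤ ν) (hg : Measurable g)
    (hg0 : ∀ y, 0 ≤ g y) (hgM : ∀ y, g y ≤ M) (hx : x ∈ Ω) :
    curveInfSet g x Ωᶜ ν ≤ (2 * C_H + 1) * infDist x Ωᶜ * restrMax μ p (κ * infDist x Ωᶜ) g x := by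
  have hd : 0 < infDist x Ωᶜ := (hΩ.isClosed_compl.notMem_iff_infDist_pos hΩc).1 (not_not.2 hx)
  exact le_mul_of_forall_lt_imp_le_mul (by positivity) fun c hc =>
    curveInfSet_le_of_pointwiseHardy_of_lt hQC hball hp hΩ hΩc hCH hκ hH hν hg hg0 hgM hx hc

end HardyImpliesCurveCondition

section Annuli

variable {X : Type*} [MetricSpace X]

def dyadicAnnulus (x : X) (R : ℝ) (k : ℕ) : Set X :=
  ball x (4 * R / 2 ^ k) \ closedBall x (R / 2 ^ k)

theorem isOpen_dyadicAnnulus (x : X) (R : ℝ) (k : ℕ) : IsOpen (dyadicAnnulus x R k) :=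
  isOpen_ball.sdiff isClosed_closedBall

theorem exists_mem_dyadicAnnulus {x z : X} (hz : z ≠ x) {R : ℝ} (hzR : dist z x ≤ 2 * R) :
    ∃ k, z ∈ dyadicAnnulus x R k := by
  have hd : 0 < dist z x := dist_pos.2 hz
  obtain ⟨k, hk, hk'⟩ := exists_nat_pow_near ((one_le_div hd).2 hzR) one_lt_two
  rw [le_div_iff₀ hd] at hk
  rw [div_lt_iff₀ hd, pow_succ] at hk'
  refine ⟨k, mem_ball.2 ?_, fun h => (mem_closedBall.1 h).not_gt ?_⟩
  · rw [lt_div_iff₀ (by positivity)]; nlinarith [pow_pos (two_pos : (0:ℝ) < 2) k]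
  · rw [div_lt_iff₀ (by positivity)]; nlinarith

theorem dist_lt_of_mem_dyadicAnnulus {x z : X} {R : ℝ} {k : ℕ} (hz : z ∈ dyadicAnnulus x R k) :
    R / 2 ^ k < dist z x :=
  not_le.1 fun h => hz.2 (mem_closedBall.2 h)

variable [MeasurableSpace X] {μ : Measure X} {D : ℝ}

theorem IsDoubling.measure_ball_le (hdoub : IsDoubling μ D) {x y : X} {t s : ℝ}
    (hx : x ∈ ball y t) (hs : s ≤ 2 * t) :
    μ (ball x s) ≤ ENNReal.ofReal D ^ 2 * μ (ball y t) := by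
  have ht := pos_of_mem_ball hx
  have hsub : ball x s ⊆ ball y (2 * (2 * t)) := fun z hz => by
    have := dist_triangle z x y
    rw [mem_ball] at hz hx ⊢
    linarith
  calc μ (ball x s) ≤ μ (ball y (2 * (2 * t))) := measure_mono hsub
    _ ≤ ENNReal.ofReal D * (ENNReal.ofReal D * μ (ball y t)) :=
        (hdoub y _ (by positivity)).trans (by gcongr; exact hdoub y t ht)
    _ = ENNReal.ofReal D ^ 2 * μ (ball y t) := by ring

end Annuli

section LowerSemicontinuousMajorant

open ENNReal

variable {X : Type*} [MetricSpace X] [MeasurableSpace X] [BorelSpace X] {μ : Measure X}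

theorem exists_lsc_ge_on_lintegral_tsub_le [μ.WeaklyRegular] {G : X → ℝ≥0∞} (hG : Measurable G)
    {C : ℝ≥0∞} (hGC : ∀ z, G z ≤ C) {U : Set X} (hU : IsOpen U) (hμU : μ U ≠ ⊤) (hC : C ≠ ⊤)
    {ε : ℝ≥0∞} (hε : ε ≠ 0) :
    ∃ F : X → ℝ≥0∞, LowerSemicontinuous F ∧ (∀ z, F z ≤ C) ∧ (∀ z ∈ U, G z ≤ F z) ∧
      (∀ z ∉ U, F z = 0) ∧ ∫⁻ z, F z - G z ∂μ ≤ ε := by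
  obtain ⟨F, hGF, hF, hFint⟩ :=
    exists_le_lowerSemicontinuous_lintegral_ge μ (U.indicator G) (hG.indicator hU.measurableSet) hε
  have hUG : ∫⁻ z, U.indicator G z ∂μ ≠ ⊤ := by
    rw [lintegral_indicator hU.measurableSet]
    exact ne_top_of_le_ne_top (mul_ne_top hC hμU)
      ((setLIntegral_mono measurable_const fun z _ => hGC z).trans_eq (setLIntegral_const _ _))
  refine ⟨fun z => min (F z) (U.indicator (fun _ => C) z),
    hF.inf (hU.lowerSemicontinuous_indicator zero_le), fun z => ?_, fun z hz => ?_,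
    fun z hz => by simp [hz], ?_⟩
  · exact (min_le_right _ _).trans (indicator_le_self' (fun _ _ => zero_le) z)
  · simpa [hz, hGC z] using hGF z
  calc ∫⁻ z, min (F z) (U.indicator (fun _ => C) z) - G z ∂μ
      ≤ ∫⁻ z, F z - U.indicator G z ∂μ := lintegral_mono fun z => by
        by_cases hz : z ∈ U
        · simpa [hz] using tsub_le_tsub_right (min_le_left (F z) C) (G z)
        · simp [hz]
    _ = ∫⁻ z, F z ∂μ - ∫⁻ z, U.indicator G z ∂μ :=
        lintegral_sub (hG.indicator hU.measurableSet) hUG (ae_of_all _ hGF)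
    _ ≤ ε := tsub_le_iff_left.2 hFint

theorem setLIntegral_tsub_le_of_dyadicAnnulus {D : ℝ} (hdoub : IsDoubling μ D) {x : X} {R : ℝ}
    {k : ℕ} {F G : X → ℝ≥0∞} (hF : ∀ z ∉ dyadicAnnulus x R k, F z = 0) {δ : ℝ≥0∞}
    (hFG : ∫⁻ z, F z - G z ∂μ ≤ δ * μ (ball x (R / 2 ^ k))) {y : X} {t : ℝ} (hx : x ∈ ball y t) :
    ∫⁻ z in ball y t, F z - G z ∂μ ≤ δ * (ENNReal.ofReal D ^ 2 * μ (ball y t)) := by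
  by_cases hmeet : (dyadicAnnulus x R k ∩ ball y t).Nonempty
  · obtain ⟨z, hzA, hzB⟩ := hmeet
    have hzx : dist z x < 2 * t := by
      have := dist_triangle z y x
      rw [mem_ball] at hzB hx
      linarith [dist_comm x y]
    calc ∫⁻ z in ball y t, F z - G z ∂μ ≤ ∫⁻ z, F z - G z ∂μ := setLIntegral_le_lintegral _ _
      _ ≤ δ * μ (ball x (R / 2 ^ k)) := hFG
      _ ≤ δ * (ENNReal.ofReal D ^ 2 * μ (ball y t)) := by
        gcongr
        exact hdoub.measure_ball_le hx ((dist_lt_of_mem_dyadicAnnulus hzA).trans hzx).le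
  · have h0 : ∀ z ∈ ball y t, F z - G z = 0 := fun z hz => by
      rw [hF z fun h => hmeet ⟨z, h, hz⟩, zero_tsub]
    rw [setLIntegral_congr_fun measurableSet_ball h0, lintegral_zero]
    exact zero_le

theorem setLIntegral_iSup_le_of_dyadicAnnulus {D : ℝ} (hdoub : IsDoubling μ D) {x : X} {R : ℝ}
    {G : X → ℝ≥0∞} (hG : Measurable G) {F : ℕ → X → ℝ≥0∞} (hF : ∀ k, Measurable (F k))
    (hF0 : ∀ k, ∀ z ∉ dyadicAnnulus x R k, F k z = 0) {δ : ℝ≥0∞}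
    (hFG : ∀ k, ∫⁻ z, F k z - G z ∂μ ≤ δ * 2⁻¹ ^ k * μ (ball x (R / 2 ^ k))) {y : X} {t : ℝ}
    (hx : x ∈ ball y t) :
    ∫⁻ z in ball y t, ⨆ k, F k z ∂μ
      ≤ ∫⁻ z in ball y t, G z ∂μ + δ * (2 * ENNReal.ofReal D ^ 2) * μ (ball y t) :=
  calc ∫⁻ z in ball y t, ⨆ k, F k z ∂μ
      ≤ ∫⁻ z in ball y t, G z ∂μ + ∑' k, ∫⁻ z in ball y t, F k z - G z ∂μ :=
        setLIntegral_iSup_le_add_tsum hG hF _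
    _ ≤ ∫⁻ z in ball y t, G z ∂μ + ∑' k, δ * 2⁻¹ ^ k * (ENNReal.ofReal D ^ 2 * μ (ball y t)) := by
        gcongr with k
        exact setLIntegral_tsub_le_of_dyadicAnnulus hdoub (hF0 k) (hFG k) hx
    _ = ∫⁻ z in ball y t, G z ∂μ + δ * (2 * ENNReal.ofReal D ^ 2) * μ (ball y t) := by
        rw [ENNReal.tsum_mul_right, ENNReal.tsum_mul_left, ENNReal.tsum_geometric,
          one_sub_inv_two, inv_inv]
        ring

theorem exists_lsc_majorant_setLAverage_le [μ.WeaklyRegular] {D : ℝ} (hD : 0 < D)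
    (hdoub : IsDoubling μ D) (hball : BallsPosFinite μ) {G : X → ℝ≥0∞} (hG : Measurable G)
    {C : ℝ≥0∞} (hC : C ≠ ⊤) (hGC : ∀ z, G z ≤ C) (x : X) {R : ℝ} (hR : 0 < R) {ε : ℝ≥0∞}
    (hε : ε ≠ 0) :
    ∃ H : X → ℝ≥0∞, LowerSemicontinuous H ∧ (∀ z, H z ≤ C) ∧ (∀ z ≠ x, G z ≤ H z) ∧
      ∀ y t, x ∈ ball y t → t < R → ⨍⁻ z in ball y t, H z ∂μ ≤ ⨍⁻ z in ball y t, G z ∂μ + ε := by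
  set K : ℝ≥0∞ := 2 * ENNReal.ofReal D ^ 2
  have hK0 : K ≠ 0 := mul_ne_zero two_ne_zero (pow_ne_zero _ (ENNReal.ofReal_pos.2 hD).ne')
  have hKtop : K ≠ ⊤ := mul_ne_top ofNat_ne_top (pow_ne_top ofReal_ne_top)
  have hδ (k : ℕ) : ε / K * 2⁻¹ ^ k * μ (ball x (R / 2 ^ k)) ≠ 0 :=
    mul_ne_zero (mul_ne_zero (ENNReal.div_ne_zero.2 ⟨hε, hKtop⟩) (pow_ne_zero _ (by simp)))
      (hball x _ (by positivity)).1.ne'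
  choose F hF hFC hGF hF0 hFint using fun k =>
    exists_lsc_ge_on_lintegral_tsub_le (μ := μ) hG hGC (isOpen_dyadicAnnulus x R k)
      (ne_top_of_le_ne_top (hball x (4 * R / 2 ^ k) (by positivity)).2.ne
        (measure_mono sdiff_subset)) hC (hδ k)
  set far := (closedBall x (2 * R))ᶜ
  refine ⟨fun z => max (⨆ k, F k z) (far.indicator (fun _ => C) z),
    (lowerSemicontinuous_iSup hF).sup
      (isClosed_closedBall.isOpen_compl.lowerSemicontinuous_indicator zero_le),
    fun z => max_le (iSup_le fun k => hFC k z) (indicator_le_self' (fun _ _ => zero_le) z),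
    fun z hz => ?_, fun y t hx htR => ?_⟩
  · by_cases hzR : dist z x ≤ 2 * R
    · obtain ⟨k, hk⟩ := exists_mem_dyadicAnnulus hz hzR
      exact (hGF k z hk).trans ((le_iSup (fun k => F k z) k).trans (le_max_left _ _))
    · have hzfar : z ∈ far := fun h => hzR (mem_closedBall.1 h)
      exact (hGC z).trans (le_max_of_le_right (indicator_of_mem hzfar (fun _ => C)).ge)
  have hμB := hball y t (pos_of_mem_ball hx)
  have hnear (z : X) (hz : z ∈ ball y t) :
      max (⨆ k, F k z) (far.indicator (fun _ => C) z) = ⨆ k, F k z := by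
    have := dist_triangle z y x
    rw [mem_ball] at hz hx
    have hzfar : z ∉ far := fun h => h (mem_closedBall.2 (by linarith [dist_comm x y]))
    rw [indicator_of_notMem hzfar, max_eq_left zero_le]
  refine setLAverage_le_add_of_setLIntegral_le hμB.1.ne' hμB.2.ne ?_
  rw [setLIntegral_congr_fun measurableSet_ball hnear, ← ENNReal.div_mul_cancel hK0 hKtop (b := ε)]
  exact setLIntegral_iSup_le_of_dyadicAnnulus hdoub hG (fun k => (hF k).measurable) hF0 hFint hx

theorem exists_lsc_majorant_setAverage_rpow_le [μ.WeaklyRegular] {D : ℝ} (hD : 0 < D)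
    (hdoub : IsDoubling μ D) (hball : BallsPosFinite μ) {g : X → ℝ} (hg : Measurable g)
    (hg0 : ∀ z, 0 ≤ g z) {M : ℝ} (hgM : ∀ z, g z ≤ M) {p : ℝ} (hp : 0 < p) (x : X) {R : ℝ}
    (hR : 0 < R) {η : ℝ} (hη : 0 < η) :
    ∃ h : X → ℝ, LowerSemicontinuous h ∧ (∀ z, 0 ≤ h z) ∧ (∀ z, h z ≤ M) ∧
      (∀ z ≠ x, g z ≤ h z) ∧ ∀ y t, x ∈ ball y t → t < R →
        ⨍ z in ball y t, |h z| ^ p ∂μ ≤ ⨍ z in ball y t, |g z| ^ p ∂μ + η := by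
  have hM0 : 0 ≤ M := (hg0 x).trans (hgM x)
  set G : X → ℝ≥0∞ := fun z => ENNReal.ofReal (g z ^ p)
  set C : ℝ≥0∞ := ENNReal.ofReal (M ^ p)
  have hGC (z : X) : G z ≤ C := ofReal_le_ofReal (Real.rpow_le_rpow (hg0 z) (hgM z) hp.le)
  obtain ⟨H, hH, hHC, hGH, hHav⟩ := exists_lsc_majorant_setLAverage_le hD hdoub hball
    (hg.pow_const p).ennreal_ofReal ofReal_ne_top hGC x hR (ofReal_pos.2 hη).ne'
  have hrpow_toReal {a : ℝ} (ha : 0 ≤ a) : (ENNReal.ofReal (a ^ p) ^ p⁻¹).toReal = a := by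
    rw [ofReal_rpow_of_nonneg (Real.rpow_nonneg ha p) (by positivity),
      Real.rpow_rpow_inv ha hp.ne', toReal_ofReal ha]
  have hHtop (z : X) : H z ≠ ⊤ := ne_top_of_le_ne_top ofReal_ne_top (hHC z)
  refine ⟨fun z => (H z ^ p⁻¹).toReal, hH.toReal_rpow ofReal_ne_top hHC (by positivity),
    fun z => toReal_nonneg, fun z => ?_, fun z hz => ?_, fun y t hx htR => ?_⟩
  · rw [← hrpow_toReal hM0]
    exact toReal_mono (rpow_ne_top_of_nonneg (by positivity) ofReal_ne_top)
      (rpow_le_rpow (hHC z) (by positivity))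
  · rw [← hrpow_toReal (hg0 z)]
    exact toReal_mono (rpow_ne_top_of_nonneg (by positivity) (hHtop z))
      (rpow_le_rpow (hGH z hz) (by positivity))
  have hμB := hball y t (pos_of_mem_ball hx)
  have hHp (z : X) : |(H z ^ p⁻¹).toReal| ^ p = (H z).toReal := by
    rw [abs_of_nonneg toReal_nonneg, toReal_rpow, rpow_inv_rpow hp.ne']
  have hGp (z : X) : |g z| ^ p = (G z).toReal := by
    rw [abs_of_nonneg (hg0 z), toReal_ofReal (Real.rpow_nonneg (hg0 z) p)]
  simp only [hHp, hGp]
  exact setAverage_toReal_le_add hH.measurable.aemeasurable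
    (hg.pow_const p).ennreal_ofReal.aemeasurable hHtop (fun _ => ofReal_ne_top)
    (ne_top_of_le_ne_top ofReal_ne_top ((setLAverage_mono_ae _ (ae_of_all _ hGC)).trans_eq
      (setLAverage_const hμB.1.ne' hμB.2.ne C))) hη.le (hHav y t hx htR)

end LowerSemicontinuousMajorant

section CurveConditionImpliesHardy

variable {X : Type*} [MetricSpace X] [MeasurableSpace X] [BorelSpace X] {μ : Measure X}
  {C_QC C_Γ D κ p ν : ℝ} {Ω : Set X}

theorem abs_le_integral_of_le_on_diff_singleton {u g φ : X → ℝ} {M : ℝ} {x : X} (hΩ : IsOpen Ω)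
    (hu : ∀ y ∉ Ω, u y = 0) (hg : Measurable g) (hgM : ∀ y, |g y| ≤ M)
    (hug : IsUpperGradient g u) (hφ : Measurable φ) (hφM : ∀ y, |φ y| ≤ M) (hφ0 : ∀ y, 0 ≤ φ y)
    (hgφ : ∀ y ∈ Ω, y ≠ x → g y ≤ φ y) (hx : x ∈ Ω) {γ : Curve X} (hγ : γ.ConnectsSet x Ωᶜ) :
    |u x| ≤ γ.integral φ := by
  obtain ⟨t₁, t₀, ht₁, hlt, ht₀, hγt₁, hγt₀, hmid⟩ := γ.exists_last_visit_first_exit hΩ hx hγ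
  have hsub : Ioo t₁ t₀ ⊆ Icc 0 γ.len := fun t ht => ⟨ht₁.trans ht.1.le, ht.2.le.trans ht₀⟩
  have hup := hug (γ.restrict ht₁ hlt ht₀)
  rw [γ.restrict_toFun_zero, γ.restrict_toFun_len, γ.integral_restrict, hγt₁, hu _ hγt₀,
    sub_zero, integral_Icc_eq_integral_Ioc, integral_Ioc_eq_integral_Ioo] at hup
  calc |u x| ≤ ∫ t in Ioo t₁ t₀, g (γ.toFun t) := hup
    _ ≤ ∫ t in Ioo t₁ t₀, φ (γ.toFun t) :=
        setIntegral_mono_on (γ.integrableOn_comp hg hgM measurableSet_Ioo hsub)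
          (γ.integrableOn_comp hφ hφM measurableSet_Ioo hsub) measurableSet_Ioo
          fun t ht => hgφ _ (hmid t ht).1 (hmid t ht).2
    _ ≤ γ.integral φ :=
        setIntegral_mono_set (γ.integrableOn_comp hφ hφM measurableSet_Icc le_rfl)
          (ae_of_all _ fun t => hφ0 _) hsub.eventuallyLE

theorem exists_lsc_majorant_restrMax_le [μ.WeaklyRegular] (hD : 0 < D) (hdoub : IsDoubling μ D)
    (hball : BallsPosFinite μ) (hp : 1 ≤ p) (hΩ : IsOpen Ω) {g : X → ℝ} (hg : Measurable g)
    (hg0 : ∀ z, 0 ≤ g z) {M : ℝ} (hgM : ∀ z, g z ≤ M) (x : X) {r : ℝ} (hr : 0 < r) {c : ℝ}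
    (hc : restrMax μ p r g x < c) :
    ∃ h : X → ℝ, LowerSemicontinuous h ∧ (∀ z, 0 ≤ h z) ∧ (∀ z, h z ≤ M) ∧
      (∀ z ∉ Ω, h z = 0) ∧ (∀ z ∈ Ω, z ≠ x → g z ≤ h z) ∧ restrMax μ p r h x ≤ c := by
  have hp0 : 0 < p := one_pos.trans_le hp
  have habs (z : X) : |g z| ≤ M := (abs_of_nonneg (hg0 z)).trans_le (hgM z)
  have hη : 0 < c - restrMax μ p r g x := sub_pos.2 hc
  obtain ⟨h, hh, hh0, hhM, hgh, hhav⟩ := exists_lsc_majorant_setAverage_rpow_le hD hdoub hball hg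
    hg0 hgM hp0 x hr (Real.rpow_pos_of_pos hη p)
  have hΩh0 (z : X) : 0 ≤ Ω.indicator h z := indicator_nonneg (fun z _ => hh0 z) z
  have hΩhM (z : X) : Ω.indicator h z ≤ M :=
    (indicator_le_self' (fun z _ => hh0 z) z).trans (hhM z)
  refine ⟨Ω.indicator h, hh.indicator_of_isOpen hh0 hΩ, hΩh0, hΩhM,
    fun z hz => indicator_of_notMem hz _, fun z hz hzx => (indicator_of_mem hz h).symm ▸ hgh z hzx,
    ?_⟩
  have hrestr := restrMax_le_add hball hp hr hg habs hη.le fun y t hx ht => by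
    have hμB := hball y t (pos_of_mem_ball hx)
    refine (setAverage_mono_on measurableSet_ball ?_ ?_ fun z _ => ?_).trans (hhav y t hx ht)
    · exact integrableOn_abs_rpow (hh.measurable.indicator hΩ.measurableSet)
        (fun z => (abs_of_nonneg (hΩh0 z)).trans_le (hΩhM z)) hp0.le hμB.2.ne
    · exact integrableOn_abs_rpow hh.measurable
        (fun z => (abs_of_nonneg (hh0 z)).trans_le (hhM z)) hp0.le hμB.2.ne
    · rw [abs_of_nonneg (hΩh0 z), abs_of_nonneg (hh0 z)]
      exact Real.rpow_le_rpow (hΩh0 z) (indicator_le_self' (fun z _ => hh0 z) z) hp0.le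
  linarith

theorem pointwiseHardy_of_curveInfSet_le [μ.WeaklyRegular] (hD : 0 < D)
    (hdoub : IsDoubling μ D) (hball : BallsPosFinite μ) (hQC : IsQuasiconvex X C_QC) (hp : 1 ≤ p)
    (hΩ : IsOpen Ω) (hΩc : Ωᶜ.Nonempty) (hCΓ : 0 < C_Γ) (hν : C_QC < ν) (hκ : 0 < κ)
    (hcc : ∀ g : X → ℝ, LowerSemicontinuous g → (∀ y, 0 ≤ g y) → (∃ M, ∀ y, g y ≤ M) →
      (∀ y ∉ Ω, g y = 0) → ∀ x ∈ Ω,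
        curveInfSet g x Ωᶜ ν ≤ C_Γ * infDist x Ωᶜ * restrMax μ p (κ * infDist x Ωᶜ) g x) :
    PointwiseHardy μ p Ω C_Γ κ := by
  intro u g _ hu hg hg0 ⟨M, hgM⟩ hug x hx
  have hd : 0 < infDist x Ωᶜ := (hΩ.isClosed_compl.notMem_iff_infDist_pos hΩc).1 (not_not.2 hx)
  refine le_mul_of_forall_lt_imp_le_mul (mul_pos hCΓ hd) fun c hc => ?_
  obtain ⟨h, hh, hh0, hhM, hhΩ, hgh, hhc⟩ := exists_lsc_majorant_restrMax_le hD hdoub hball hp hΩ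
    hg hg0 hgM x (mul_pos hκ hd) hc
  have habs {f : X → ℝ} (hf0 : ∀ z, 0 ≤ f z) (hfM : ∀ z, f z ≤ M) (z : X) : |f z| ≤ M :=
    (abs_of_nonneg (hf0 z)).trans_le (hfM z)
  calc |u x| ≤ curveInfSet h x Ωᶜ ν :=
        le_curveInfSet (hQC.exists_curve_connectsSet_len_le hΩ.isClosed_compl hΩc (not_not.2 hx) hν)
          fun γ hγ => abs_le_integral_of_le_on_diff_singleton hΩ hu hg (habs hg0 hgM) hug
            hh.measurable (habs hh0 hhM) hh0 hgh hx hγ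
    _ ≤ C_Γ * infDist x Ωᶜ * restrMax μ p (κ * infDist x Ωᶜ) h x :=
        hcc h hh hh0 ⟨M, hhM⟩ hhΩ x hx
    _ ≤ C_Γ * infDist x Ωᶜ * c := by gcongr

end CurveConditionImpliesHardy

theorem BallsPosFinite.isFiniteMeasureOnCompacts {X : Type*} [MetricSpace X] [MeasurableSpace X]
    {μ : Measure X} (hball : BallsPosFinite μ) : IsFiniteMeasureOnCompacts μ where
  lt_top_of_isCompact K hK := by
    rcases K.eq_empty_or_nonempty with rfl | ⟨x, -⟩
    · simp
    obtain ⟨r, hr, hKr⟩ := hK.isBounded.subset_ball_lt 0 x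
    exact (measure_mono hKr).trans_lt (hball x r hr).2

theorem pointwise_hardy_iff_curve_condition_vanishing_general
    {X : Type*} [MetricSpace X] [MeasurableSpace X] [BorelSpace X] [ProperSpace X]
    (μ : Measure X) (C_QC D : ℝ)
    (hQC : IsQuasiconvex X C_QC) (hD : 1 < D)
    (hdoub : IsDoubling μ D) (hball : BallsPosFinite μ)
    (p' p : ℝ) (hp'1 : 1 ≤ p') (hp'p : p' < p)
    (Ω : Set X) (hΩo : IsOpen Ω) (hΩprop : Ω ≠ univ) :
    (∃ C_H > 0, ∃ κ ≥ 1, PointwiseHardy μ p Ω C_H κ) ↔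
      (∃ C_Γ > 0, ∃ ν > C_QC, ∃ κ ≥ 1, ∀ g : X → ℝ,
        LowerSemicontinuous g → (∀ y, 0 ≤ g y) → (∃ M, ∀ y, g y ≤ M) →
        (∀ y ∉ Ω, g y = 0) → ∀ x ∈ Ω,
        curveInfSet g x Ωᶜ ν ≤ C_Γ * infDist x Ωᶜ * restrMax μ p (κ * infDist x Ωᶜ) g x) := by
  have hp : 1 ≤ p := hp'1.trans hp'p.le
  have hΩc : Ωᶜ.Nonempty := nonempty_compl.2 hΩprop
  have := hball.isFiniteMeasureOnCompacts
  constructor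
  · rintro ⟨C_H, hCH, κ, hκ, hH⟩
    refine ⟨2 * C_H + 1, by linarith, |C_QC| + (2 * C_H + 1), by linarith [le_abs_self C_QC], κ,
      hκ, fun g hg hg0 ⟨M, hgM⟩ _ x hx => ?_⟩
    exact curveInfSet_le_of_pointwiseHardy hQC hball hp hΩo hΩc hCH.le (by linarith) hH
      (by linarith [abs_nonneg C_QC]) hg.measurable hg0 hgM hx
  · rintro ⟨C_Γ, hCΓ, ν, hν, κ, hκ, hcc⟩
    exact ⟨C_Γ, hCΓ, κ, hκ, pointwiseHardy_of_curveInfSet_le (by linarith) hdoub hball hQC hp hΩo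
      hΩc hCΓ hν (by linarith) hcc⟩

theorem pointwise_hardy_iff_curve_condition_vanishing
    {X : Type*} [MetricSpace X] [MeasurableSpace X] [BorelSpace X] [ProperSpace X]
    [Nontrivial X] (μ : Measure X) (C_QC D : ℝ)
    (hQC : IsQuasiconvex X C_QC) (hD : 1 < D)
    (hdoub : IsDoubling μ D) (hball : BallsPosFinite μ)
    (p' p : ℝ) (hp'1 : 1 ≤ p') (hp'p : p' < p)
    (hPI : ∃ C_PI > 0, ∃ lam ≥ 1, Poincare μ p' C_PI lam)
    (Ω : Set X) (hΩo : IsOpen Ω) (hΩne : Ω.Nonempty) (hΩprop : Ω ≠ univ) :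
    (∃ C_H > 0, ∃ κ ≥ 1, PointwiseHardy μ p Ω C_H κ) ↔
      (∃ C_Γ > 0, ∃ ν > C_QC, ∃ κ ≥ 1, ∀ g : X → ℝ,
        LowerSemicontinuous g → (∀ y, 0 ≤ g y) → (∃ M, ∀ y, g y ≤ M) →
        (∀ y ∉ Ω, g y = 0) → ∀ x ∈ Ω,
        curveInfSet g x Ωᶜ ν ≤ C_Γ * infDist x Ωᶜ * restrMax μ p (κ * infDist x Ωᶜ) g x) :=
  pointwise_hardy_iff_curve_condition_vanishing_general μ C_QC D hQC hD hdoub hball p' p hp'1 hp'p Ω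
    hΩo hΩprop
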